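/- arXiv:1911.10240 — 6 statements merged into one kernel-verified Lean document; each statement's English description precedes it below -/
import Mathlib

section
/- For every finite oriented graph D, the hull number of D is at most |ext(D)| + (2/3)·|V(D) \ ext(D)|, where ext(D) is the set of extreme vertices of D. -/
variable {V : Type*}

/-- A directed walk from `u` to `v` given as its list of vertices. -/
def DiwalkFrom (A : V → V → Prop) (u v : V) (l : List V) : Prop :=
  l.Chain' A ∧ l.head? = some u ∧ l.getLast? = some v

/-- A `(u,v)`-geodesic: a directed walk of minimum length (hence a shortest directed path). -/
def IsGeodesic (A : V → V → Prop) (u v : V) (l : List V) : Prop :=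
  DiwalkFrom A u v l ∧ ∀ l', DiwalkFrom A u v l' → l.length ≤ l'.length

/-- The interval `I(S)`: `S` together with all vertices on geodesics between members of `S`. -/
def geoInterval (A : V → V → Prop) (S : Set V) : Set V :=
  S ∪ {w | ∃ u ∈ S, ∃ v ∈ S, ∃ l, IsGeodesic A u v l ∧ w ∈ l}

def GeoConvex (A : V → V → Prop) (S : Set V) : Prop := geoInterval A S = S

/-- The geodesic convex hull of `S`. -/
def geoHull (A : V → V → Prop) (S : Set V) : Set V := ⋂₀ {T | S ⊆ T ∧ GeoConvex A T}

def IsHullSet (A : V → V → Prop) (S : Set V) : Prop := geoHull A S = Set.univ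

def IsGeodeticSet (A : V → V → Prop) (S : Set V) : Prop := geoInterval A S = Set.univ

noncomputable def hullNumber (A : V → V → Prop) : ℕ :=
  sInf {n | ∃ S : Set V, S.Finite ∧ S.ncard = n ∧ IsHullSet A S}

noncomputable def geodeticNumber (A : V → V → Prop) : ℕ :=
  sInf {n | ∃ S : Set V, S.Finite ∧ S.ncard = n ∧ IsGeodeticSet A S}

def IsSource (A : V → V → Prop) (v : V) : Prop := ∀ u, ¬ A u v
def IsSink (A : V → V → Prop) (v : V) : Prop := ∀ w, ¬ A v w
def IsTransitiveVtx (A : V → V → Prop) (v : V) : Prop :=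
  (∃ u, A u v) ∧ (∃ w, A v w) ∧ ∀ u w, A u v → A v w → A u w
def IsExtremeVtx (A : V → V → Prop) (v : V) : Prop :=
  IsSource A v ∨ IsSink A v ∨ IsTransitiveVtx A v

/-- An oriented graph: an asymmetric (hence irreflexive) arc relation. -/
def Oriented (A : V → V → Prop) : Prop := ∀ u v, A u v → ¬ A v u

/-- Directed distance, `⊤` if there is no directed walk. -/
noncomputable def ddist (A : V → V → Prop) (u v : V) : ℕ∞ :=
  sInf {n : ℕ∞ | ∃ l, DiwalkFrom A u v l ∧ (l.length : ℕ∞) = n + 1}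

/-!
A non-extreme vertex `v` has an in-neighbour `u` and an out-neighbour `w` with no arc `u → w`,
so `u v w` is a geodesic and `v` lies in the interval of `{u, w}`. Greedily pick such a `v`
among the non-extreme vertices and discard `v, u, w`; the picked vertices `X` are at least a third
of the non-extreme ones, and `V \ X` is a hull set, since the picks, taken in order, each lie on a
geodesic between vertices that are unpicked or picked earlier.
-/

variable {A : V → V → Prop}

theorem geoInterval_mono {S T : Set V} (h : S ⊆ T) : geoInterval A S ⊆ geoInterval A T := by
  rintro x (hx | ⟨u, hu, v, hv, l, hl, hx⟩)
  · exact Or.inl (h hx)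
  · exact Or.inr ⟨u, h hu, v, h hv, l, hl, hx⟩

theorem GeoConvex.geoInterval_subset {S C : Set V} (hC : GeoConvex A C) (h : S ⊆ C) :
    geoInterval A S ⊆ C :=
  hC ▸ geoInterval_mono h

theorem isHullSet_iff {S : Set V} :
    IsHullSet A S ↔ ∀ C, GeoConvex A C → S ⊆ C → C = Set.univ := by
  refine ⟨fun h C hC hSC => Set.eq_univ_of_univ_subset (h ▸ Set.sInter_subset_of_mem ⟨hSC, hC⟩),
    fun h => Set.sInter_eq_univ.2 fun C ⟨hSC, hC⟩ => h C hC hSC⟩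

theorem IsHullSet.hullNumber_le_ncard {S : Set V} (h : IsHullSet A S) (hS : S.Finite) :
    hullNumber A ≤ S.ncard :=
  Nat.sInf_le ⟨S, hS, rfl, h⟩

theorem IsHullSet.of_insert {S : Set V} {v : V} (hv : v ∈ geoInterval A S)
    (h : IsHullSet A (insert v S)) : IsHullSet A S :=
  isHullSet_iff.2 fun C hC hSC =>
    isHullSet_iff.1 h C hC (Set.insert_subset (hC.geoInterval_subset hSC hv) hSC)

theorem Oriented.irrefl (hA : Oriented A) (v : V) : ¬ A v v :=
  fun h => hA v v h h

theorem exists_not_arc_of_not_isExtremeVtx {v : V} (h : ¬ IsExtremeVtx A v) :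
    ∃ u w, A u v ∧ A v w ∧ ¬ A u w := by
  simp only [IsExtremeVtx, IsSource, IsSink, IsTransitiveVtx, not_or, not_forall,
    not_not] at h
  obtain ⟨⟨u, hu⟩, ⟨w, hw⟩, htrans⟩ := h
  by_contra! hall
  exact htrans ⟨⟨u, hu⟩, ⟨w, hw⟩, hall⟩

theorem isGeodesic_of_not_arc (hA : Oriented A) {u v w : V} (huv : A u v) (hvw : A v w)
    (huw : ¬ A u w) : IsGeodesic A u w [u, v, w] := by
  have hne : u ≠ w := fun h => hA u v huv (h ▸ hvw)
  refine ⟨⟨List.isChain_cons_cons.2 ⟨huv, List.isChain_pair.2 hvw⟩, rfl, rfl⟩, ?_⟩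
  rintro (_ | ⟨x, _ | ⟨y, _ | ⟨z, l⟩⟩⟩) ⟨hchain, hhead, hlast⟩
  · simp at hhead
  · simp only [List.head?_cons, List.getLast?_singleton, Option.some_inj] at hhead hlast
    exact absurd (hhead.symm.trans hlast) hne
  · simp only [List.head?_cons, Option.some_inj] at hhead
    simp only [List.getLast?_cons_cons, List.getLast?_singleton, Option.some_inj] at hlast
    exact absurd (hhead ▸ hlast ▸ List.isChain_pair.1 hchain) huw
  · simp

theorem mem_geoInterval_of_not_arc (hA : Oriented A) {S : Set V} {u v w : V} (hu : u ∈ S)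
    (hw : w ∈ S) (huv : A u v) (hvw : A v w) (huw : ¬ A u w) : v ∈ geoInterval A S :=
  Or.inr ⟨u, hu, w, hw, _, isGeodesic_of_not_arc hA huv hvw huw, by simp⟩

theorem exists_isHullSet_compl (hA : Oriented A) [DecidableEq V] (T : Finset V)
    (hT : ∀ v ∈ T, ¬ IsExtremeVtx A v) :
    ∃ X ⊆ T, T.card ≤ 3 * X.card ∧ IsHullSet A (↑X)ᶜ := by
  induction T using Finset.strongInduction with
  | _ T ih =>
  obtain rfl | ⟨v, hv⟩ := T.eq_empty_or_nonempty
  · refine ⟨∅, subset_rfl, by simp, isHullSet_iff.2 fun C _ hC => ?_⟩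
    simpa using hC
  obtain ⟨u, w, huv, hvw, huw⟩ := exists_not_arc_of_not_isExtremeVtx (hT v hv)
  obtain ⟨X, hXT, hcard, hhull⟩ := ih (T \ {v, u, w}) ((Finset.ssubset_iff_of_subset
    Finset.sdiff_subset).2 ⟨v, hv, by simp⟩) fun x hx => hT x (Finset.mem_sdiff.1 hx).1
  have hvX : v ∉ X := fun h => by simpa using hXT h
  have hu : u ∉ insert v X := by
    rw [Finset.mem_insert, not_or]
    exact ⟨fun h => hA.irrefl v (h ▸ huv), fun h => by simpa using hXT h⟩
  have hw : w ∉ insert v X := by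
    rw [Finset.mem_insert, not_or]
    exact ⟨fun h => hA.irrefl v (h ▸ hvw), fun h => by simpa using hXT h⟩
  refine ⟨insert v X, Finset.insert_subset hv (hXT.trans Finset.sdiff_subset), ?_, ?_⟩
  · calc T.card ≤ (T \ {v, u, w}).card + ({v, u, w} : Finset V).card :=
          Finset.card_le_card_sdiff_add_card
      _ ≤ 3 * X.card + 3 := add_le_add hcard Finset.card_le_three
      _ = 3 * (insert v X).card := by rw [Finset.card_insert_of_notMem hvX]; ring
  · refine IsHullSet.of_insert (mem_geoInterval_of_not_arc hA hu hw huv hvw huw) ?_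
    convert hhull using 1
    ext x
    by_cases hx : x = v <;> simp [hx, hvX]

/-- for every finite oriented graph `D`,
`ohn(D) ≤ |ext(D)| + (2/3)·|V(D) \ ext(D)|`. -/
theorem stmt_0 [Fintype V] (A : V → V → Prop) (hA : Oriented A) :
    (hullNumber A : ℚ) ≤ ({v | IsExtremeVtx A v} : Set V).ncard
      + (2/3 : ℚ) * ({v | ¬ IsExtremeVtx A v} : Set V).ncard := by
  classical
  obtain ⟨X, -, hcard, hhull⟩ :=
    exists_isHullSet_compl hA ({v | ¬ IsExtremeVtx A v} : Set V).toFinset (by simp)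
  rw [← Set.ncard_eq_toFinset_card'] at hcard
  have hle : hullNumber A + X.card ≤ Fintype.card V :=
    calc hullNumber A + X.card ≤ (↑X : Set V)ᶜ.ncard + (↑X : Set V).ncard := by
          rw [Set.ncard_coe_finset]
          exact Nat.add_le_add_right (hhull.hullNumber_le_ncard (Set.toFinite _)) _
      _ = Fintype.card V := by
          rw [add_comm, Set.ncard_add_ncard_compl, Nat.card_eq_fintype_card]
  have hsplit : ({v | IsExtremeVtx A v} : Set V).ncard
      + ({v | ¬ IsExtremeVtx A v} : Set V).ncard = Fintype.card V := by
    rw [← Nat.card_eq_fintype_card, ← Set.ncard_add_ncard_compl {v | IsExtremeVtx A v}]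
    rfl
  have h3 : 3 * hullNumber A ≤ 3 * ({v | IsExtremeVtx A v} : Set V).ncard
      + 2 * ({v | ¬ IsExtremeVtx A v} : Set V).ncard := by
    omega
  have h3' := (Nat.cast_le (α := ℚ)).2 h3
  push_cast at h3'
  linarith
end

section
/- Let G be a graph and G→C4 the oriented graph obtained from G by replacing each edge v_i v_j with a directed 4-cycle (v_i, v_{i,j}, v_j, v_{j,i}). Then for all vertices v_i, v_j of G, d_{G→C4}(v_i, v_j) = d_{G→C4}(v_j, v_i) = 2·d_G(v_i, v_j). -/
variable {V : Type*}

/-- Vertex set of `G→C4`: original vertices plus one vertex `v_{i,j}` per ordered adjacent pair. -/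
abbrev oC4V {V : Type*} (G : SimpleGraph V) := V ⊕ {p : V × V // G.Adj p.1 p.2}

/-- `G→C4`: each edge `v_i v_j` of `G` replaced by the directed 4-cycle
`(v_i, v_{i,j}, v_j, v_{j,i})`. -/
def oC4 {V : Type*} (G : SimpleGraph V) : oC4V G → oC4V G → Prop
  | Sum.inl i, Sum.inr p => i = p.1.1
  | Sum.inr p, Sum.inl j => j = p.1.2
  | _, _ => False

/-!
A directed walk in `G→C4` between original vertices must alternate between original vertices and
subdivision vertices, and `v_i → v_{i,j} → v_j` is the only way to pass from `v_i` to a neighbour.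
So such walks are exactly the walks of `G` with every edge traversed through one of its two
subdivision vertices, which doubles their length; both directions are available because each edge
carries one subdivision vertex per orientation.
-/

open Sum

section DiwalkFrom

variable {A : V → V → Prop} {u v w x y : V} {l : List V}

theorem DiwalkFrom.ne_nil (h : DiwalkFrom A u v l) : l ≠ [] := by
  rintro rfl
  simp [DiwalkFrom] at h

theorem diwalkFrom_singleton : DiwalkFrom A u v [x] ↔ x = u ∧ x = v := by
  simp [DiwalkFrom, List.Chain']

theorem diwalkFrom_cons_cons :
    DiwalkFrom A u w (x :: y :: l) ↔ x = u ∧ A x y ∧ DiwalkFrom A y w (y :: l) := by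
  simp only [DiwalkFrom, List.Chain', List.isChain_cons_cons, List.head?_cons,
    List.getLast?_cons_cons, Option.some.injEq]
  tauto

theorem DiwalkFrom.cons (huv : A u v) (h : DiwalkFrom A v w l) : DiwalkFrom A u w (u :: l) := by
  obtain ⟨y, l, rfl⟩ := List.exists_cons_of_ne_nil h.ne_nil
  obtain rfl : y = v := by simpa [DiwalkFrom] using h.2.1
  exact diwalkFrom_cons_cons.2 ⟨rfl, huv, h⟩

theorem DiwalkFrom.reverse (hA : Std.Symm A) (h : DiwalkFrom A u v l) :
    DiwalkFrom A v u l.reverse := by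
  obtain ⟨hc, hu, hv⟩ := h
  refine ⟨?_, by simpa using hv, by simpa using hu⟩
  exact List.isChain_reverse.2 (hc.imp fun _ _ hab => hA.symm _ _ hab)

theorem ddist_eq_iInf (A : V → V → Prop) (u v : V) :
    ddist A u v = ⨅ (l : List V) (_ : DiwalkFrom A u v l), ((l.length - 1 : ℕ) : ℕ∞) := by
  apply le_antisymm
  · refine le_iInf₂ fun l hl => sInf_le ⟨l, hl, ?_⟩
    have := List.length_pos_of_ne_nil hl.ne_nil
    norm_cast
    omega
  · refine le_sInf ?_
    rintro n ⟨l, hl, hn⟩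
    refine iInf₂_le_of_le l hl ?_
    induction n using ENat.recTopCoe with
    | top => simp at hn
    | coe n =>
      norm_cast at hn ⊢
      omega

theorem ddist_eq_mul_of_rescaled_walks {W : Type*} {B : W → W → Prop} {u' v' : W} {k : ℕ}
    (hk : k ≠ 0)
    (lift : ∀ l, DiwalkFrom A u v l →
      ∃ l', DiwalkFrom B u' v' l' ∧ l'.length - 1 ≤ k * (l.length - 1))
    (proj : ∀ l', DiwalkFrom B u' v' l' →
      ∃ l, DiwalkFrom A u v l ∧ k * (l.length - 1) ≤ l'.length - 1) :
    ddist B u' v' = k * ddist A u v := by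
  have hk' : (k : ℕ∞) ≠ 0 := by exact_mod_cast hk
  simp only [ddist_eq_iInf, ENat.mul_iInf_of_ne hk']
  apply le_antisymm
  · refine le_iInf₂ fun l hl => ?_
    obtain ⟨l', hl', hlen⟩ := lift l hl
    exact iInf₂_le_of_le l' hl' (by exact_mod_cast hlen)
  · refine le_iInf₂ fun l' hl' => ?_
    obtain ⟨l, hl, hlen⟩ := proj l' hl'
    exact iInf₂_le_of_le l hl (by exact_mod_cast hlen)

theorem ddist_comm (hA : Std.Symm A) (u v : V) : ddist A u v = ddist A v u := by
  simpa using ddist_eq_mul_of_rescaled_walks one_ne_zero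
    (fun l hl => ⟨l.reverse, hl.reverse hA, by simp⟩)
    (fun l hl => ⟨l.reverse, hl.reverse hA, by simp⟩)

end DiwalkFrom

section OrientedC4

variable {G : SimpleGraph V}

theorem oC4_inl_inr (p : {p : V × V // G.Adj p.1 p.2}) : oC4 G (inl p.1.1) (inr p) := rfl

theorem oC4_inr_inl (p : {p : V × V // G.Adj p.1 p.2}) : oC4 G (inr p) (inl p.1.2) := rfl

theorem DiwalkFrom.exists_oC4 : ∀ {i j : V} {l : List V}, DiwalkFrom G.Adj i j l →
    ∃ l' : List (oC4V G), DiwalkFrom (oC4 G) (inl i) (inl j) l' ∧ l'.length + 1 = 2 * l.length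
  | _, _, [], h => absurd rfl h.ne_nil
  | _, _, [_], h => by
    obtain ⟨rfl, rfl⟩ := diwalkFrom_singleton.1 h
    exact ⟨[inl _], diwalkFrom_singleton.2 ⟨rfl, rfl⟩, rfl⟩
  | _, _, x :: y :: l, h => by
    obtain ⟨rfl, hxy, hrest⟩ := diwalkFrom_cons_cons.1 h
    obtain ⟨l', hl', hlen⟩ := hrest.exists_oC4
    let p : {p : V × V // G.Adj p.1 p.2} := ⟨(x, y), hxy⟩
    refine ⟨inl x :: inr p :: l', (hl'.cons (oC4_inr_inl p)).cons (oC4_inl_inr p), ?_⟩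
    simp only [List.length_cons] at hlen ⊢
    omega

theorem DiwalkFrom.exists_of_oC4 : ∀ {i j : V} {l' : List (oC4V G)},
    DiwalkFrom (oC4 G) (inl i) (inl j) l' →
    ∃ l, DiwalkFrom G.Adj i j l ∧ 2 * l.length = l'.length + 1
  | _, _, [], h => absurd rfl h.ne_nil
  | _, _, [_], h => by
    obtain ⟨rfl, hij⟩ := diwalkFrom_singleton.1 h
    obtain rfl := inl_injective hij
    exact ⟨[_], diwalkFrom_singleton.2 ⟨rfl, rfl⟩, rfl⟩
  | _, _, [_, y], h => by
    obtain ⟨rfl, hxy, hy⟩ := diwalkFrom_cons_cons.1 h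
    obtain ⟨-, rfl⟩ := diwalkFrom_singleton.1 hy
    exact hxy.elim
  | _, _, _ :: inl _ :: _ :: _, h => by
    obtain ⟨rfl, hxy, -⟩ := diwalkFrom_cons_cons.1 h
    exact hxy.elim
  | _, _, _ :: inr _ :: inr _ :: _, h => by
    obtain ⟨rfl, -, hp⟩ := diwalkFrom_cons_cons.1 h
    exact (diwalkFrom_cons_cons.1 hp).2.1.elim
  | _, _, _ :: inr p :: inl k :: l', h => by
    obtain ⟨rfl, hi, hp⟩ := diwalkFrom_cons_cons.1 h
    obtain rfl : _ = p.1.1 := hi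
    obtain ⟨-, hk, hk'⟩ := diwalkFrom_cons_cons.1 hp
    obtain rfl : k = p.1.2 := hk
    obtain ⟨l, hl, hlen⟩ := hk'.exists_of_oC4
    refine ⟨p.1.1 :: l, hl.cons p.2, ?_⟩
    simp only [List.length_cons] at hlen ⊢
    omega

theorem ddist_oC4_inl (i j : V) :
    ddist (oC4 G) (inl i) (inl j) = 2 * ddist G.Adj i j := by
  refine ddist_eq_mul_of_rescaled_walks (k := 2) two_ne_zero (fun l hl => ?_) (fun l' hl' => ?_)
  · obtain ⟨l', hl', hlen⟩ := hl.exists_oC4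
    exact ⟨l', hl', by omega⟩
  · obtain ⟨l, hl, hlen⟩ := hl'.exists_of_oC4
    exact ⟨l, hl, by omega⟩

end OrientedC4

/-- distances between original vertices in `G→C4` are twice the
undirected distances in `G`, in both directions. -/
theorem stmt_6 (G : SimpleGraph V) (i j : V) :
    ddist (oC4 G) (Sum.inl i) (Sum.inl j) = 2 * ddist G.Adj i j ∧
    ddist (oC4 G) (Sum.inl j) (Sum.inl i) = 2 * ddist G.Adj i j :=
  ⟨ddist_oC4_inl i j, by rw [ddist_oC4_inl, ddist_comm G.symm]⟩
end

section
/- Let D be an oriented cactus, u,v ∈ V(D), and P a directed (u,v)-path containing a vertex w that does not belong to any cycle of D. Then every directed (u,v)-path in D contains w. -/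
variable {V : Type*}

/-- A cactus: connected, and any two cycles sharing an edge have the same edge set
(i.e., every edge lies in at most one cycle). -/
def IsCactus {V : Type*} (G : SimpleGraph V) : Prop :=
  G.Connected ∧ ∀ ⦃x y : V⦄ (c₁ : G.Walk x x) (c₂ : G.Walk y y),
    c₁.IsCycle → c₂.IsCycle → (∃ e, e ∈ c₁.edges ∧ e ∈ c₂.edges) →
    (∀ e, e ∈ c₁.edges ↔ e ∈ c₂.edges)

/-- `v` is a cut-vertex of the connected graph `G`. -/
def IsCutVertex {V : Type*} (G : SimpleGraph V) (v : V) : Prop :=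
  G.Connected ∧ ¬ (G.induce {w | w ≠ v}).Connected

/-
Suppose a directed `(u,v)`-path `Q` misses `w`, and let `p` be the predecessor of `w` on `P`.
Since `w` lies on no cycle, `pw` is a bridge. But the part of `P` before `w` avoids `w`, the part
after `w` avoids `p`, and `Q` avoids `w`, so none of them uses `pw`; together they join `p` to `w`
without it.
-/

open SimpleGraph

theorem SimpleGraph.isBridge_of_forall_isCycle_notMem_support {G : SimpleGraph V} {p w : V}
    (hw : ∀ (x : V) (c : G.Walk x x), c.IsCycle → w ∉ c.support) (h : G.Adj p w) :
    G.IsBridge s(p, w) :=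
  (isBridge_iff_forall_cycle_notMem h).2 fun _ c hc he =>
    hw _ c hc (c.snd_mem_support_of_mem_edges he)

theorem List.IsChain.reflTransGen_of_head?_of_getLast? {r : V → V → Prop} {l : List V} {a b : V}
    (hl : l.IsChain r) (ha : l.head? = some a) (hb : l.getLast? = some b) :
    Relation.ReflTransGen r a b := by
  have hne : l ≠ [] := by rintro rfl; simp at ha
  rw [List.head?_eq_some_head hne, Option.some_inj] at ha
  rw [List.getLast?_eq_some_getLast hne, Option.some_inj] at hb
  exact ha ▸ hb ▸ List.relationReflTransGen_of_exists_isChain l hl hne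

namespace DiwalkFrom

variable {A : V → V → Prop} {u v : V} {l : List V}

theorem head_mem (hl : DiwalkFrom A u v l) : u ∈ l :=
  List.mem_of_head? hl.2.1

theorem of_append_cons {s t : List V} {w p : V} (hl : DiwalkFrom A u v (s ++ w :: t))
    (hp : s.getLast? = some p) :
    DiwalkFrom A u p s ∧ A p w ∧ DiwalkFrom A w v (w :: t) := by
  obtain ⟨hchain, hhead, hlast⟩ := hl
  obtain ⟨hs, hwt, hpw⟩ := List.isChain_append.1 hchain
  have hne : s ≠ [] := by rintro rfl; simp at hp
  refine ⟨⟨hs, ?_, hp⟩, hpw p hp w rfl, ⟨hwt, rfl, ?_⟩⟩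
  · rwa [List.head?_append_of_ne_nil _ hne] at hhead
  · rwa [List.getLast?_append_of_ne_nil _ (List.cons_ne_nil w t)] at hlast

theorem reachable_deleteEdges {G : SimpleGraph V} (hAG : ∀ x y, A x y → G.Adj x y)
    (hl : DiwalkFrom A u v l) {e : Sym2 V} (he : ∃ x ∈ e, x ∉ l) :
    (G.deleteEdges {e}).Reachable u v := by
  obtain ⟨x, hxe, hxl⟩ := he
  rw [reachable_iff_reflTransGen]
  refine (hl.1.imp_of_mem_imp fun a b ha hb hab => ?_).reflTransGen_of_head?_of_getLast?
    hl.2.1 hl.2.2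
  refine (deleteEdges_adj ..).2 ⟨hAG a b hab, fun hab_e => hxl ?_⟩
  rcases Sym2.mem_iff.1 (Set.mem_singleton_iff.1 hab_e ▸ hxe) with rfl | rfl
  exacts [ha, hb]

end DiwalkFrom

theorem stmt_15_general (G : SimpleGraph V)
    (A : V → V → Prop)
    (horient : ∀ u v, G.Adj u v ↔ (A u v ∨ A v u))
    (u v w : V) (l : List V) (hl : DiwalkFrom A u v l) (hnd : l.Nodup) (hw : w ∈ l)
    (hnc : ∀ (x : V) (c : G.Walk x x), c.IsCycle → w ∉ c.support) :
    ∀ l', DiwalkFrom A u v l' → l'.Nodup → w ∈ l' := by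
  intro l' hl' _
  by_contra hwl'
  have hAG : ∀ x y, A x y → G.Adj x y := fun x y h => (horient x y).2 (Or.inl h)
  obtain ⟨s, t, rfl⟩ := List.append_of_mem hw
  obtain ⟨p, hp⟩ : ∃ p, s.getLast? = some p := by
    refine Option.isSome_iff_exists.1 (List.getLast?_isSome.2 ?_)
    rintro rfl
    exact hwl' (Option.some_inj.1 hl.2.1 ▸ hl'.head_mem)
  obtain ⟨hs, hpw, hwt⟩ := hl.of_append_cons hp
  have hdisj := (List.nodup_append.1 hnd).2.2
  have hws : w ∉ s := fun h => hdisj w h w List.mem_cons_self rfl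
  have hpwt : p ∉ w :: t := fun h => hdisj p (List.mem_of_getLast? hp) p h rfl
  have hup := hs.reachable_deleteEdges hAG (e := s(p, w)) ⟨w, Sym2.mem_mk_right p w, hws⟩
  have huv := hl'.reachable_deleteEdges hAG (e := s(p, w)) ⟨w, Sym2.mem_mk_right p w, hwl'⟩
  have hwv := hwt.reachable_deleteEdges hAG (e := s(p, w)) ⟨p, Sym2.mem_mk_left p w, hpwt⟩
  exact isBridge_iff.1 (isBridge_of_forall_isCycle_notMem_support hnc (hAG p w hpw))
    ((hup.symm.trans huv).trans hwv.symm)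

/-- in an oriented cactus, if a directed `(u,v)`-path contains a vertex
`w` lying on no cycle, then every directed `(u,v)`-path contains `w`. -/
theorem stmt_15 (G : SimpleGraph V) (hG : IsCactus G)
    (A : V → V → Prop) (hA : Oriented A)
    (horient : ∀ u v, G.Adj u v ↔ (A u v ∨ A v u))
    (u v w : V) (l : List V) (hl : DiwalkFrom A u v l) (hnd : l.Nodup) (hw : w ∈ l)
    (hnc : ∀ (x : V) (c : G.Walk x x), c.IsCycle → w ∉ c.support) :
    ∀ l', DiwalkFrom A u v l' → l'.Nodup → w ∈ l' :=
  stmt_15_general G A horient u v w l hl hnd hw hnc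
end

section
/- Let D be an oriented cactus, C ⊆ D a cycle, and P a directed (u,v)-path intersecting C in a subpath with endpoints w1 (first) and wq (last), where the intersection has at least 2 vertices. Then for every directed (u,v)-path P* in D, the intersection P* ∩ C is a directed (w1,wq)-path; in particular every (u,v)-path enters C at w1 and leaves at wq. -/
variable {V : Type*}

/-! In a cactus, a walk between distinct vertices `s`, `t` of a cycle `C` that meets `C` only
in `s` and `t` must use the edge `st`: otherwise its bypass, closed up by an arc of `C`, is a
cycle sharing an edge with `C` whose first edge leaves `C`. Hence all walks from a vertex `u`
enter `C` at the same vertex. Applied to `P` and `P*`, and to their reversals, this pins the first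
and last vertices of `P* ∩ C`; if `P*` missed `C`, then `P*` followed by `P` backwards would enter
`C` at `wq ≠ w1`. Two consecutive cycle vertices `a`, `b` of `P*` are adjacent on `P*`, since
from the vertex after `a` both `a` and `b` would be entry points. -/

open SimpleGraph

theorem List.Nodup.ne_of_head?_of_getLast? {α : Type*} {l : List α} {a b : α} (hl : l.Nodup)
    (h2 : 2 ≤ l.length) (ha : l.head? = some a) (hb : l.getLast? = some b) : a ≠ b := by
  match l, h2 with
  | x :: y :: t, _ =>
    rintro rfl
    obtain rfl : x = a := by simpa using ha
    rw [List.getLast?_cons_cons] at hb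
    exact (List.nodup_cons.1 hl).1 (List.mem_of_getLast? hb)

theorem List.isChain_filter_of_gap {α : Type*} {R : α → α → Prop} (P : α → Bool) {l : List α}
    (hl : l.IsChain R)
    (hgap : ∀ a m b rest, a :: (m ++ b :: rest) <:+ l → P a → P b → (∀ z ∈ m, ¬ P z) → m = []) :
    (l.filter P).IsChain R := by
  induction l with
  | nil => exact List.IsChain.nil
  | cons y t ih =>
    have ht := ih hl.tail fun a m b rest hs => hgap a m b rest (hs.trans (List.suffix_cons y t))
    by_cases hy : P y
    · rw [List.filter_cons_of_pos hy, List.isChain_cons]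
      refine ⟨fun b hb => ?_, ht⟩
      obtain ⟨f, hf⟩ := List.head?_eq_some_iff.1 hb
      obtain ⟨m, rest, rfl, hm, hPb, -⟩ := List.filter_eq_cons_iff.1 hf
      obtain rfl := hgap y m b rest (List.suffix_refl _) hy hPb hm
      exact (List.isChain_cons_cons.1 hl).1
    · rw [List.filter_cons_of_neg hy]
      exact ht

section

variable {G : SimpleGraph V}

theorem SimpleGraph.Walk.exists_support_eq_of_isChain {l : List V} {u v : V}
    (hl : l.IsChain G.Adj) (hu : l.head? = some u) (hv : l.getLast? = some v) :
    ∃ p : G.Walk u v, p.support = l := by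
  have hne : l ≠ [] := by rintro rfl; simp at hu
  refine ⟨(Walk.ofSupport l hne hl).copy ?_ ?_, by rw [Walk.support_copy, Walk.support_ofSupport]⟩
  · exact (List.head_eq_iff_head?_eq_some hne).2 hu
  · exact (List.getLast_eq_iff_getLast?_eq_some hne).2 hv

theorem SimpleGraph.isChain_adj_reverse {l : List V} (hl : l.IsChain G.Adj) :
    l.reverse.IsChain G.Adj :=
  List.isChain_reverse.2 (hl.imp fun _ _ h => h.symm)

variable [DecidableEq V]

theorem SimpleGraph.Walk.exists_isPath_of_mem_support {x s t : V} (c : G.Walk x x)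
    (hs : s ∈ c.support) (ht : t ∈ c.support) :
    ∃ Q : G.Walk s t, Q.IsPath ∧ Q.edges ⊆ c.edges ∧ Q.support ⊆ c.support := by
  let W := (c.dropUntil s hs).append (c.takeUntil t ht)
  refine ⟨W.bypass, W.bypass_isPath, List.Subset.trans W.edges_bypass_subset_edges ?_,
    List.Subset.trans W.support_bypass_subset_support ?_⟩
  · simp only [W, Walk.edges_append, List.append_subset]
    exact ⟨c.edges_dropUntil_subset_edges hs, c.edges_takeUntil_subset_edges ht⟩
  · intro z hz
    rw [Walk.mem_support_append_iff] at hz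
    exact hz.elim (c.support_dropUntil_subset_support hs ·) (c.support_takeUntil_subset_support ht ·)

theorem SimpleGraph.exists_walk_of_head?_filter {x u w : V} {c : G.Walk x x} {l : List V}
    (hl : l.IsChain G.Adj) (hu : l.head? = some u)
    (hw : (l.filter (fun z => z ∈ c.support)).head? = some w) :
    w ∈ c.support ∧ ∃ p : G.Walk u w, ∀ z ∈ p.support, z ∈ c.support → z = w := by
  obtain ⟨f, hf⟩ := List.head?_eq_some_iff.1 hw
  obtain ⟨l₀, l₁, rfl, hl₀, hwc, -⟩ := List.filter_eq_cons_iff.1 hf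
  have hpre : l₀ ++ [w] <+: l₀ ++ w :: l₁ := ⟨l₁, by simp⟩
  obtain ⟨p, hp⟩ := Walk.exists_support_eq_of_isChain (hl.prefix hpre)
    (by cases l₀ <;> simpa using hu) List.getLast?_concat
  refine ⟨by simpa using hwc, p, fun z hz hzc => ?_⟩
  rw [hp, List.mem_append, List.mem_singleton] at hz
  exact hz.resolve_left fun hz₀ => hl₀ z hz₀ (by simpa using hzc)

namespace IsCactus

variable {x : V} {c : G.Walk x x}

theorem mk_mem_edges_of_inter_cycle {s t : V} (hG : IsCactus G)
    (hc : c.IsCycle) (hs : s ∈ c.support) (ht : t ∈ c.support) (hst : s ≠ t) (W : G.Walk s t)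
    (hW : ∀ z ∈ W.support, z ∈ c.support → z = s ∨ z = t) : s(s, t) ∈ W.edges := by
  by_contra hWst
  have hR : W.bypass.IsPath := W.bypass_isPath
  have hRc : ∀ z ∈ W.bypass.support, z ∈ c.support → z = s ∨ z = t :=
    fun z hz => hW z (W.support_bypass_subset_support hz)
  have hRnil : ¬ W.bypass.Nil := fun h => hst h.eq
  have hsnd : W.bypass.snd ∉ c.support := by
    intro h
    rcases hRc _ (W.bypass.getVert_mem_support 1) h with h | h
    · exact (W.bypass.adj_snd hRnil).ne h.symm
    · have hst_mem := W.bypass.mk_start_snd_mem_edges hRnil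
      rw [Walk.snd, h] at hst_mem
      exact hWst (W.edges_bypass_subset_edges hst_mem)
  obtain ⟨Q, hQ, hQe, hQs⟩ := c.exists_isPath_of_mem_support ht hs
  have hlen : 1 < W.bypass.length := by
    have h0 : W.bypass.length ≠ 0 := fun h => hRnil (Walk.length_eq_zero_iff.1 h)
    have h1 : W.bypass.length ≠ 1 := fun h => hsnd (by
      rw [Walk.snd, ← h, Walk.getVert_length]; exact ht)
    omega
  have hdisj : W.bypass.support.tail.Disjoint Q.support.tail := by
    intro z hzR hzQ
    rcases hRc z (List.mem_of_mem_tail hzR) (hQs (List.mem_of_mem_tail hzQ)) with rfl | rfl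
    · exact (List.nodup_cons.1 (W.bypass.cons_tail_support ▸ hR.support_nodup)).1 hzR
    · exact (List.nodup_cons.1 (Q.cons_tail_support ▸ hQ.support_nodup)).1 hzQ
  have hcyc : (W.bypass.append Q).IsCycle := hR.isCycle_append hQ hdisj (Or.inl hlen)
  obtain ⟨e, he⟩ : ∃ e, e ∈ Q.edges := by
    cases Q with
    | nil => exact absurd rfl hst
    | cons h _ => exact ⟨_, List.mem_cons_self⟩
  have hshared := hG.2 _ _ hcyc hc ⟨e, Walk.edges_append _ _ ▸ List.mem_append_right _ he, hQe he⟩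
  have hfirst : s(s, W.bypass.snd) ∈ (W.bypass.append Q).edges :=
    Walk.edges_append _ _ ▸ List.mem_append_left _ (W.bypass.mk_start_snd_mem_edges hRnil)
  exact hsnd (c.snd_mem_support_of_mem_edges ((hshared _).1 hfirst))

theorem eq_of_walks_to_cycle {u w w' : V} (hG : IsCactus G)
    (hc : c.IsCycle) (hw : w ∈ c.support) (hw' : w' ∈ c.support)
    (p : G.Walk u w) (hp : ∀ z ∈ p.support, z ∈ c.support → z = w)
    (p' : G.Walk u w') (hp' : ∀ z ∈ p'.support, z ∈ c.support → z = w') : w = w' := by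
  by_contra hne
  have hmeet : ∀ z ∈ (p.reverse.append p').support, z ∈ c.support → z = w ∨ z = w' := by
    intro z hz hzc
    rw [Walk.mem_support_append_iff, Walk.support_reverse, List.mem_reverse] at hz
    exact hz.imp (hp z · hzc) (hp' z · hzc)
  have hedge := hG.mk_mem_edges_of_inter_cycle hc hw hw' hne _ hmeet
  rw [Walk.edges_append, Walk.edges_reverse, List.mem_append, List.mem_reverse] at hedge
  rcases hedge with h | h
  · exact hne (hp w' (p.snd_mem_support_of_mem_edges h) hw').symm
  · exact hne (hp' w (p'.fst_mem_support_of_mem_edges h) hw)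

theorem head?_filter_eq {u v w1 wq : V} {l l' : List V} (hG : IsCactus G) (hc : c.IsCycle)
    (hl : l.IsChain G.Adj) (hu : l.head? = some u) (hv : l.getLast? = some v)
    (hl' : l'.IsChain G.Adj) (hu' : l'.head? = some u) (hv' : l'.getLast? = some v)
    (hw1 : (l.filter (fun z => z ∈ c.support)).head? = some w1)
    (hwq : (l.filter (fun z => z ∈ c.support)).getLast? = some wq) (hne : w1 ≠ wq) :
    (l'.filter (fun z => z ∈ c.support)).head? = some w1 := by
  obtain ⟨hw1c, p, hp⟩ := exists_walk_of_head?_filter hl hu hw1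
  cases hf : (l'.filter (fun z => z ∈ c.support)).head? with
  | some w' =>
    obtain ⟨hw'c, p', hp'⟩ := exists_walk_of_head?_filter hl' hu' hf
    rw [hG.eq_of_walks_to_cycle hc hw1c hw'c p hp p' hp']
  | none =>
    have hoff : ∀ z ∈ l', z ∉ c.support := by
      simpa using List.filter_eq_nil_iff.1 (List.head?_eq_none_iff.1 hf)
    obtain ⟨hwqc, q, hq⟩ := exists_walk_of_head?_filter (isChain_adj_reverse hl)
      (by simpa using hv) (by simpa using hwq)
    obtain ⟨r, hr⟩ := Walk.exists_support_eq_of_isChain hl' hu' hv'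
    refine absurd (hG.eq_of_walks_to_cycle hc hw1c hwqc p hp (r.append q) fun z hz hzc => ?_) hne
    rw [Walk.mem_support_append_iff, hr] at hz
    exact hz.elim (fun h => absurd hzc (hoff z h)) (hq z · hzc)

theorem getLast?_filter_eq {u v w1 wq : V} {l l' : List V} (hG : IsCactus G) (hc : c.IsCycle)
    (hl : l.IsChain G.Adj) (hu : l.head? = some u) (hv : l.getLast? = some v)
    (hl' : l'.IsChain G.Adj) (hu' : l'.head? = some u) (hv' : l'.getLast? = some v)
    (hw1 : (l.filter (fun z => z ∈ c.support)).head? = some w1)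
    (hwq : (l.filter (fun z => z ∈ c.support)).getLast? = some wq) (hne : w1 ≠ wq) :
    (l'.filter (fun z => z ∈ c.support)).getLast? = some wq := by
  simpa using hG.head?_filter_eq hc (isChain_adj_reverse hl) (by simpa using hv)
    (by simpa using hu) (isChain_adj_reverse hl') (by simpa using hv') (by simpa using hu')
    (by simpa using hwq) (by simpa using hw1) hne.symm

theorem isChain_filter {R : V → V → Prop} {l : List V} (hG : IsCactus G) (hc : c.IsCycle)
    (hR : ∀ a b, R a b → G.Adj a b) (hl : l.IsChain R) (hnd : l.Nodup) :
    (l.filter (fun z => z ∈ c.support)).IsChain R := by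
  refine List.isChain_filter_of_gap _ hl fun a m b rest hs ha hb hm => ?_
  simp only [decide_eq_true_eq] at ha hb hm
  cases m with
  | nil => rfl
  | cons y m =>
    have hseg : (a :: y :: (m ++ b :: rest)).IsChain G.Adj := (hl.suffix hs).imp hR
    have hab : a ≠ b := by
      rintro rfl
      exact (List.nodup_cons.1 (hnd.sublist hs.sublist)).1 (by simp)
    have hya : G.Adj y a := (List.isChain_cons_cons.1 hseg).1.symm
    have hbfirst : ((y :: (m ++ b :: rest)).filter (fun z => z ∈ c.support)).head? = some b := by
      have hmc : (m.filter (fun z => z ∈ c.support)) = [] :=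
        List.filter_eq_nil_iff.2 fun z hz => by simpa using hm z (List.mem_cons_of_mem y hz)
      simp [List.filter_append, hmc, hm y List.mem_cons_self, hb]
    obtain ⟨-, q, hq⟩ := exists_walk_of_head?_filter hseg.tail rfl hbfirst
    refine absurd (hG.eq_of_walks_to_cycle hc ha hb hya.toWalk (fun z hz hzc => ?_) q hq) hab
    simp only [Adj.toWalk, Walk.support_cons, Walk.support_nil, List.mem_cons,
      List.not_mem_nil, or_false] at hz
    exact hz.resolve_left fun h => hm y (by simp) (h ▸ hzc)

end IsCactus

end

theorem stmt_16_general [DecidableEq V] (G : SimpleGraph V) (hG : IsCactus G)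
    (A : V → V → Prop)
    (horient : ∀ u v, G.Adj u v ↔ (A u v ∨ A v u))
    (u v x : V) (c : G.Walk x x) (hc : c.IsCycle)
    (l : List V) (hl : DiwalkFrom A u v l) (hnd : l.Nodup)
    (w1 wq : V)
    (hint : DiwalkFrom A w1 wq (l.filter (fun z => z ∈ c.support)))
    (h2 : 2 ≤ (l.filter (fun z => z ∈ c.support)).length) :
    ∀ l', DiwalkFrom A u v l' → l'.Nodup →
      DiwalkFrom A w1 wq (l'.filter (fun z => z ∈ c.support)) := by
  rintro l' ⟨hA', hu', hv'⟩ hnd'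
  obtain ⟨hA, hu, hv⟩ := hl
  obtain ⟨-, hw1, hwq⟩ := hint
  have hAG : ∀ a b, A a b → G.Adj a b := fun a b h => (horient a b).2 (Or.inl h)
  have hlG : l.IsChain G.Adj := List.IsChain.imp hAG hA
  have hlG' : l'.IsChain G.Adj := List.IsChain.imp hAG hA'
  have hne : w1 ≠ wq := (hnd.filter _).ne_of_head?_of_getLast? h2 hw1 hwq
  exact ⟨hG.isChain_filter hc hAG hA' hnd',
    hG.head?_filter_eq hc hlG hu hv hlG' hu' hv' hw1 hwq hne,
    hG.getLast?_filter_eq hc hlG hu hv hlG' hu' hv' hw1 hwq hne⟩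

/-- in an oriented cactus, if a directed `(u,v)`-path meets a cycle `C`
in a directed `(w1,wq)`-subpath with at least two vertices, then the intersection of
every directed `(u,v)`-path with `C` is a directed `(w1,wq)`-path. -/
theorem stmt_16 [DecidableEq V] (G : SimpleGraph V) (hG : IsCactus G)
    (A : V → V → Prop) (hA : Oriented A)
    (horient : ∀ u v, G.Adj u v ↔ (A u v ∨ A v u))
    (u v x : V) (c : G.Walk x x) (hc : c.IsCycle)
    (l : List V) (hl : DiwalkFrom A u v l) (hnd : l.Nodup)
    (w1 wq : V)
    (hint : DiwalkFrom A w1 wq (l.filter (fun z => z ∈ c.support)))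
    (h2 : 2 ≤ (l.filter (fun z => z ∈ c.support)).length) :
    ∀ l', DiwalkFrom A u v l' → l'.Nodup →
      DiwalkFrom A w1 wq (l'.filter (fun z => z ∈ c.support)) :=
  stmt_16_general G hG A horient u v x c hc l hl hnd w1 wq hint h2
end

section
/- Let D be an oriented cactus and C a receiver trap cycle of D (a directed cycle all of whose cut-vertices have in-neighbors outside C but no out-neighbors outside C). Then V(C) is co-convex in D, i.e., V(D) \ V(C) is geodesically convex. Consequently, every hull set of D contains a vertex of C. -/
variable {V : Type*}

/-! A directed walk that enters a set with no outgoing arcs never leaves it, so the complement of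
such a set is geodesically convex, and a hull set must meet the set. In a cactus no arc leaves a
cycle `C` whose cut-vertices are not transmitters: a vertex `a` of `C` with a neighbour `b` off `C`
is a cut-vertex, since otherwise a path from `b` back to the successor of `a` on `C` avoiding `a`
would close a second cycle sharing an edge with `C` but containing the edge `ab ∉ C`. -/

theorem List.IsChain.getLast?_mem_of_forall_rel {α : Type*} {R : α → α → Prop} {T : Set α}
    (hT : ∀ p ∈ T, ∀ q, R p q → q ∈ T) {l : List α} (hl : l.IsChain R) {w v : α}
    (hw : w ∈ l) (hwT : w ∈ T) (hv : l.getLast? = some v) : v ∈ T := by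
  obtain ⟨s, t, rfl⟩ := List.append_of_mem hw
  have htail : ∀ i ∈ t, i ∈ T :=
    hl.right_of_append.cons_induction (· ∈ T) t (fun p q hpq hp => hT p hp q hpq) hwT
  rw [List.getLast?_append_of_ne_nil _ (List.cons_ne_nil _ _)] at hv
  rcases List.mem_cons.mp (List.mem_of_getLast? hv) with rfl | hvt
  · exact hwT
  · exact htail v hvt

theorem geoConvex_compl_of_forall_rel {A : V → V → Prop} {T : Set V}
    (hT : ∀ p ∈ T, ∀ q, A p q → q ∈ T) : GeoConvex A Tᶜ := by
  refine Set.union_eq_left.mpr ?_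
  rintro w ⟨u, -, v, hv, l, ⟨⟨hl, -, hlast⟩, -⟩, hwl⟩ hwT
  exact hv (List.IsChain.getLast?_mem_of_forall_rel hT hl hwl hwT hlast)

theorem IsHullSet.exists_mem_of_geoConvex_compl {A : V → V → Prop} {S T : Set V}
    (hS : IsHullSet A S) (hT : GeoConvex A Tᶜ) (hne : T.Nonempty) : ∃ v ∈ S, v ∈ T := by
  by_contra! hST
  obtain ⟨x, hx⟩ := hne
  have hx' : x ∈ geoHull A S := hS ▸ Set.mem_univ x
  exact Set.mem_sInter.mp hx' Tᶜ ⟨hST, hT⟩ hx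

open SimpleGraph

theorem SimpleGraph.Connected.exists_path_avoiding {G : SimpleGraph V} {a b y : V}
    (hcon : (G.induce {w | w ≠ a}).Connected) (hb : b ≠ a) (hy : y ≠ a) :
    ∃ r : G.Walk b y, r.IsPath ∧ a ∉ r.support := by
  classical
  obtain ⟨q⟩ := hcon.preconnected ⟨b, hb⟩ ⟨y, hy⟩
  let q' : G.Walk b y := q.map (Embedding.induce _).toHom
  refine ⟨q'.bypass, q'.bypass_isPath, fun ha => ?_⟩
  obtain ⟨⟨z, hz⟩, -, hza⟩ :=
    List.mem_map.mp (Walk.support_map _ q ▸ q'.support_bypass_subset_support ha)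
  exact hz hza

theorem IsCactus.isCutVertex_of_adj_not_mem_support {G : SimpleGraph V} (hG : IsCactus G)
    {u a b : V} {c : G.Walk u u} (hc : c.IsCycle) (ha : a ∈ c.support) (hb : b ∉ c.support)
    (hab : G.Adj a b) : IsCutVertex G a := by
  refine ⟨hG.1, fun hcon => ?_⟩
  obtain ⟨e, he, hae⟩ := (Walk.mem_support_iff_exists_mem_edges_of_not_nil hc.not_nil).1 ha
  set y := Sym2.Mem.other hae
  have hay : s(a, y) ∈ c.edges := (Sym2.other_spec hae).symm ▸ he
  have hya : G.Adj y a := (c.adj_of_mem_edges hay).symm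
  have hyb : y ≠ b := fun h => hb (h ▸ c.snd_mem_support_of_mem_edges hay)
  have hba : b ≠ a := fun h => hb (h ▸ ha)
  obtain ⟨r, hr, har⟩ := hcon.exists_path_avoiding hba hya.ne
  have hcyc : (Walk.cons hya (Walk.cons hab r)).IsCycle := by
    refine Path.cons_isCycle ⟨_, hr.cons har⟩ hya ?_
    simp only [Walk.edges_cons, List.mem_cons, Sym2.eq_iff, not_or]
    exact ⟨by tauto, fun h => har (r.snd_mem_support_of_mem_edges h)⟩
  have hshare := hG.2 _ _ hc hcyc ⟨s(a, y), hay, by simp [Sym2.eq_swap]⟩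
  exact hb (c.snd_mem_support_of_mem_edges ((hshare s(a, b)).2 (by simp)))

theorem stmt_17_general (G : SimpleGraph V) (hG : IsCactus G)
    (A : V → V → Prop)
    (horient : ∀ u v, G.Adj u v ↔ (A u v ∨ A v u))
    (x : V) (c : G.Walk x x) (hc : c.IsCycle)
    (hntcv : ∀ u ∈ c.support, IsCutVertex G u → ∀ z, A u z → z ∈ c.support) :
    GeoConvex A {v | v ∉ c.support} ∧
    ∀ S : Set V, IsHullSet A S → ∃ v ∈ S, v ∈ c.support := by
  have hclosed : ∀ p ∈ {v | v ∈ c.support}, ∀ q, A p q → q ∈ {v | v ∈ c.support} :=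
    fun p hp q hpq => by_contra fun hq =>
      hq (hntcv p hp (hG.isCutVertex_of_adj_not_mem_support hc hp hq
        ((horient p q).2 (.inl hpq))) q hpq)
  have hconv := geoConvex_compl_of_forall_rel hclosed
  exact ⟨hconv, fun S hS => hS.exists_mem_of_geoConvex_compl hconv ⟨x, c.start_mem_support⟩⟩

/-- in an oriented cactus, the vertex set of a receiver trap cycle is
co-convex; hence every hull set contains a vertex of the cycle. -/
theorem stmt_17 (G : SimpleGraph V) (hG : IsCactus G)
    (A : V → V → Prop) (hA : Oriented A)
    (horient : ∀ u v, G.Adj u v ↔ (A u v ∨ A v u))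
    (x : V) (c : G.Walk x x) (hc : c.IsCycle)
    (hdir : ∀ d ∈ c.darts, A d.toProd.1 d.toProd.2)
    (hrcv : ∀ u ∈ c.support, IsCutVertex G u → ∃ z, z ∉ c.support ∧ A z u)
    (hntcv : ∀ u ∈ c.support, IsCutVertex G u → ∀ z, A u z → z ∈ c.support) :
    GeoConvex A {v | v ∉ c.support} ∧
    ∀ S : Set V, IsHullSet A S → ∃ v ∈ S, v ∈ c.support :=
  stmt_17_general G hG A horient x c hc hntcv
end

section
/- Let D be an oriented cactus and C a cycle of D with exactly two extreme vertices u1 (a source in C) and u2 (a sink in C), such that the two (u1,u2)-paths along C have different lengths and the longer path has no internal cut-vertices of D. Then the set of internal vertices of the longer (u1,u2)-path is co-convex in D. -/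
variable {V : Type*}

/-! A vertex of a cactus that lies on a cycle and is not a cut-vertex has all of its edges on
that cycle, hence only two neighbours. Every internal vertex of the longer path `l2` therefore
has a unique in-neighbour and a unique out-neighbour, namely its neighbours on `l2`. A walk
that visits an internal vertex of `l2` but starts and ends outside the interior is thus forced
to run along all of `l2`; replacing that stretch by the shorter path `l1` shortens the walk, so
it was not a geodesic. -/

open SimpleGraph

section Cactus

variable {G : SimpleGraph V}

theorem exists_isPath_avoiding_of_not_isCutVertex (hG : G.Connected) {w x y : V}
    (hw : ¬ IsCutVertex G w) (hx : x ≠ w) (hy : y ≠ w) :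
    ∃ q : G.Walk x y, q.IsPath ∧ w ∉ q.support := by
  classical
  have hconn : (G.induce {z | z ≠ w}).Connected := not_not.mp fun h => hw ⟨hG, h⟩
  have hmap {a b} (p : (G.induce {z | z ≠ w}).Walk a b) :
      w ∉ (p.map (Embedding.induce _).toHom).support := by
    rw [Walk.support_map]
    simp
  obtain ⟨q⟩ := hconn.preconnected ⟨x, hx⟩ ⟨y, hy⟩
  exact ⟨q.toPath.1.map (Embedding.induce _).toHom, q.toPath.2.map Subtype.val_injective,
    hmap _⟩

variable {u w : V} {c : G.Walk u u}

theorem IsCactus.mem_edges_of_adj (hG : IsCactus G) (hc : c.IsCycle) (hw : w ∈ c.support)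
    (hcut : ¬ IsCutVertex G w) {x : V} (hx : G.Adj w x) : s(w, x) ∈ c.edges := by
  obtain ⟨a, ha, hax⟩ := Set.exists_ne_of_one_lt_ncard
    (by rw [hc.ncard_neighborSet_toSubgraph_eq_two hw]; norm_num) x
  have hwa : s(w, a) ∈ c.edges := Walk.adj_toSubgraph_iff_mem_edges.mp ha
  have hGwa : G.Adj w a := c.adj_of_mem_edges hwa
  obtain ⟨q, hq, hwq⟩ :=
    exists_isPath_avoiding_of_not_isCutVertex hG.1 hcut hGwa.ne.symm hx.ne.symm
  -- `w → x ⇝ a → w` is a cycle through `w` sharing the edge `wa` with `c`.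
  let C : G.Walk w w := .cons hx (Walk.cons hGwa q).reverse
  have hC : C.IsCycle := by
    refine (Walk.cons_isCycle_iff _ _).2 ⟨(hq.cons hwq).reverse, ?_⟩
    simp only [Walk.edges_reverse, Walk.edges_cons, List.mem_reverse, List.mem_cons,
      Sym2.eq_iff, not_or]
    exact ⟨⟨fun h => hax h.2.symm, fun h => hGwa.ne h.1⟩,
      fun h => hwq (q.fst_mem_support_of_mem_edges h)⟩
  exact (hG.2 C c hC hc ⟨s(w, a), by simp [C], hwa⟩ _).1 (by simp [C])

theorem IsCactus.encard_neighborSet_le_two (hG : IsCactus G) (hc : c.IsCycle)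
    (hw : w ∈ c.support) (hcut : ¬ IsCutVertex G w) : (G.neighborSet w).encard ≤ 2 :=
  calc (G.neighborSet w).encard ≤ (c.toSubgraph.neighborSet w).encard :=
        Set.encard_le_encard fun _ hx =>
          Walk.adj_toSubgraph_iff_mem_edges.2 (hG.mem_edges_of_adj hc hw hcut hx)
    _ = 2 := by
      rw [← c.finite_neighborSet_toSubgraph.cast_ncard_eq,
        hc.ncard_neighborSet_toSubgraph_eq_two hw]
      rfl

end Cactus

section Directed

variable {A : V → V → Prop}

theorem Oriented.subsingleton_of_encard_le_two (hA : Oriented A) {p w : V}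
    (hdeg : {z | A w z ∨ A z w}.encard ≤ 2) (hp : A p w) : {z | A w z}.Subsingleton := by
  intro z hz z' hz'
  by_contra hne
  have hpz : p ≠ z := fun h => hA _ _ hz (h ▸ hp)
  have hpz' : p ≠ z' := fun h => hA _ _ hz' (h ▸ hp)
  have hsub : ({p, z, z'} : Set V) ⊆ {z | A w z ∨ A z w} := by
    rintro y (rfl | rfl | rfl) <;> simp_all
  have := (Set.encard_le_encard hsub).trans hdeg
  rw [Set.encard_insert_of_notMem (by simp [hpz, hpz']), Set.encard_pair hne] at this
  norm_num at this

namespace List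

theorem IsChain.exists_rel_of_mem {R : V → V → Prop} {x y a : V} {m : List V}
    (h : (x :: m ++ [y]).IsChain R) (ha : a ∈ m) : (∃ p, R p a) ∧ ∃ s, R a s := by
  obtain ⟨m₁, m₂, rfl⟩ := append_of_mem ha
  have h₁ := h
  rw [show x :: (m₁ ++ a :: m₂) ++ [y] = (x :: m₁) ++ a :: (m₂ ++ [y]) by simp,
    isChain_append] at h₁
  rw [show x :: (m₁ ++ a :: m₂) ++ [y] = (x :: m₁ ++ [a]) ++ (m₂ ++ [y]) by simp,
    isChain_append] at h
  exact ⟨⟨_, h₁.2.2 _ (getLast?_eq_some_getLast (cons_ne_nil _ _)) _ rfl⟩,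
    ⟨_, h.2.2 _ getLast?_concat _ (head?_eq_some_head (by simp))⟩⟩

theorem IsChain.prefix_of_subsingleton {t : V} :
    ∀ {m l : List V}, (m ++ [t]).IsChain A → (∀ a ∈ m, {z | A a z}.Subsingleton) →
      l.IsChain A → l.head? = (m ++ [t]).head? → (∀ z ∈ l.getLast?, z ∉ m) → m ++ [t] <+: l
  | [], l, _, _, _, hhead, _ => by
    obtain ⟨l, rfl⟩ := head?_eq_some_iff.mp hhead
    simp
  | x :: m, l, hs, hm, hl, hhead, hlast => by
    obtain ⟨l, rfl⟩ := head?_eq_some_iff.mp hhead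
    obtain ⟨z, l, rfl⟩ : ∃ z l', l = z :: l' := by
      refine ne_nil_iff_exists_cons.mp fun hnil => hlast x ?_ mem_cons_self
      simp [hnil]
    rw [cons_append, List.isChain_cons] at hs
    rw [isChain_cons_cons] at hl
    have hne : m ++ [t] ≠ [] := by simp
    have hz : z = (m ++ [t]).head hne :=
      hm x mem_cons_self hl.1 (hs.1 _ (head?_eq_some_head hne))
    rw [cons_append, prefix_cons_inj]
    exact prefix_of_subsingleton hs.2 (fun a ha => hm a (mem_cons_of_mem _ ha)) hl.2
      (by rw [head?_cons, hz, head?_eq_some_head hne])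
      fun w hw hwm => hlast w (by simpa using hw) (mem_cons_of_mem _ hwm)

theorem IsChain.suffix_of_subsingleton {t : V} {m l : List V} (hs : (t :: m).IsChain A)
    (hm : ∀ a ∈ m, {z | A z a}.Subsingleton) (hl : l.IsChain A)
    (hlast : l.getLast? = (t :: m).getLast?) (hhead : ∀ z ∈ l.head?, z ∉ m) : t :: m <:+ l := by
  rw [← reverse_prefix, reverse_cons]
  refine IsChain.prefix_of_subsingleton (A := fun a b => A b a) ?_ (by simpa using hm)
    (isChain_reverse.mpr hl) ?_ (by simpa using hhead)
  · rw [← reverse_cons, isChain_reverse]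
    exact hs
  · simpa [← reverse_cons, head?_reverse] using hlast

theorem IsChain.infix_of_subsingleton {u₁ u₂ w : V} {m l : List V}
    (hs : (u₁ :: m ++ [u₂]).IsChain A) (hout : ∀ a ∈ m, {z | A a z}.Subsingleton)
    (hin : ∀ a ∈ m, {z | A z a}.Subsingleton) (hl : l.IsChain A)
    (hhead : ∀ z ∈ l.head?, z ∉ m) (hlast : ∀ z ∈ l.getLast?, z ∉ m) (hw : w ∈ l)
    (hwm : w ∈ m) : u₁ :: m ++ [u₂] <:+: l := by
  obtain ⟨m₁, m₂, rfl⟩ := append_of_mem hwm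
  obtain ⟨l₁, l₂, rfl⟩ := append_of_mem hw
  have hsub₁ : m₁ ++ [w] ⊆ m₁ ++ w :: m₂ := IsPrefix.subset ⟨m₂, by simp⟩
  have hsub₂ : w :: m₂ ⊆ m₁ ++ w :: m₂ := (suffix_append _ _).subset
  obtain ⟨X, hX⟩ : u₁ :: (m₁ ++ [w]) <:+ l₁ ++ [w] :=
    suffix_of_subsingleton (hs.infix ⟨[], m₂ ++ [u₂], by simp⟩)
      (fun a ha => hin a (hsub₁ ha)) (hl.infix ⟨[], l₂, by simp⟩)
      (by rw [← cons_append, getLast?_concat, getLast?_concat])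
      (fun z hz hzm => hhead z (by simpa using hz) (hsub₁ hzm))
  obtain ⟨Y, hY⟩ : (w :: m₂) ++ [u₂] <+: w :: l₂ :=
    prefix_of_subsingleton (hs.infix ⟨u₁ :: m₁, [], by simp⟩)
      (fun a ha => hout a (hsub₂ ha)) (hl.infix ⟨l₁, [], by simp⟩) (by simp)
      (fun z hz hzm => hlast z (by simpa using hz) (hsub₂ hzm))
  rw [← cons_append, ← append_assoc] at hX
  obtain rfl := append_cancel_right hX
  obtain rfl : l₂ = m₂ ++ [u₂] ++ Y := by simpa using hY.symm
  exact ⟨X, Y, by simp⟩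

end List

theorem DiwalkFrom.exists_eq_cons_append {u v : V} {l : List V} (h : DiwalkFrom A u v l)
    (hl : 2 ≤ l.length) : ∃ m, l = u :: m ++ [v] := by
  obtain ⟨-, hu, hv⟩ := h
  obtain ⟨r, rfl⟩ := List.head?_eq_some_iff.mp hu
  obtain ⟨m, x, rfl⟩ := List.eq_nil_or_concat' r |>.resolve_left (by rintro rfl; simp at hl)
  rw [← List.cons_append, List.getLast?_concat, Option.some_inj] at hv
  exact ⟨m, hv ▸ rfl⟩

theorem IsGeodesic.length_le_of_isInfix {u v x y : V} {l s s' : List V}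
    (hl : IsGeodesic A u v l) (hs : DiwalkFrom A x y s) (hsl : s <:+: l)
    (hs' : DiwalkFrom A x y s') : s.length ≤ s'.length := by
  obtain ⟨X, Y, rfl⟩ := hsl
  obtain ⟨⟨hc, hu, hv⟩, hmin⟩ := hl
  obtain ⟨-, hsx, hsy⟩ := hs
  obtain ⟨hc', hsx', hsy'⟩ := hs'
  have := hmin (X ++ s' ++ Y) ⟨?_, ?_, ?_⟩
  · simp only [List.length_append] at this
    omega
  · change List.IsChain A _ at hc ⊢
    simp only [List.isChain_append, List.getLast?_append, hsx, hsy, hsy',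
      Option.some_or] at hc ⊢
    exact ⟨⟨hc.1.1, hc', hsx' ▸ hc.1.2.2⟩, hc.2⟩
  · simpa [hsx, hsx'] using hu
  · simpa [hsy, hsy'] using hv

theorem geoConvex_iff {S : Set V} :
    GeoConvex A S ↔ ∀ u ∈ S, ∀ v ∈ S, ∀ l, IsGeodesic A u v l → ∀ w ∈ l, w ∈ S := by
  rw [GeoConvex, geoInterval, Set.union_eq_left, Set.ofPred_subset]
  grind

end Directed

theorem stmt_19_general (G : SimpleGraph V) (hG : IsCactus G)
    (A : V → V → Prop) (hA : Oriented A)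
    (horient : ∀ u v, G.Adj u v ↔ (A u v ∨ A v u))
    (u1 u2 : V) (l1 l2 : List V)
    (h1 : DiwalkFrom A u1 u2 l1) (h2 : DiwalkFrom A u1 u2 l2)
    (hnd2 : l2.Nodup)
    (hcyc : ∃ c : G.Walk u1 u1, c.IsCycle ∧ ∀ v, v ∈ c.support ↔ (v ∈ l1 ∨ v ∈ l2))
    (hlen : l1.length < l2.length)
    (hnocut : ∀ v ∈ l2, v ≠ u1 → v ≠ u2 → ¬ IsCutVertex G v) :
    GeoConvex A {v | ¬ (v ∈ l2 ∧ v ≠ u1 ∧ v ≠ u2)} := by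
  obtain ⟨c, hc, hcs⟩ := hcyc
  have hl1 : l1 ≠ [] := by rintro rfl; simp [DiwalkFrom] at h1
  obtain ⟨m, rfl⟩ := h2.exists_eq_cons_append (by have := List.length_pos_iff.2 hl1; omega)
  have hends : u1 ∉ m ∧ u2 ∉ m := by grind [List.nodup_cons, List.nodup_append]
  have hdeg : ∀ a ∈ m, {z | A a z ∨ A z a}.encard ≤ 2 := fun a ha => by
    have ha' : a ∈ u1 :: m ++ [u2] := by simp [ha]
    simpa [SimpleGraph.neighborSet, horient] using hG.encard_neighborSet_le_two hc
      ((hcs a).2 (Or.inr ha')) (hnocut a ha' (ne_of_mem_of_not_mem ha hends.1)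
        (ne_of_mem_of_not_mem ha hends.2))
  have hunique : ∀ a ∈ m, {z | A a z}.Subsingleton ∧ {z | A z a}.Subsingleton := fun a ha => by
    obtain ⟨⟨p, hp⟩, s, hs⟩ := h2.1.exists_rel_of_mem ha
    exact ⟨hA.subsingleton_of_encard_le_two (hdeg a ha) hp,
      Oriented.subsingleton_of_encard_le_two (A := fun x y => A y x) (fun x y => hA y x)
        (by simpa [or_comm] using hdeg a ha) hs⟩
  have hS : {v | ¬ (v ∈ u1 :: m ++ [u2] ∧ v ≠ u1 ∧ v ≠ u2)} = {v | v ∉ m} := by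
    ext v
    grind
  rw [hS, geoConvex_iff]
  intro u hu v hv l hl w hw hwm
  have hinf := List.IsChain.infix_of_subsingleton h2.1 (fun a ha => (hunique a ha).1)
    (fun a ha => (hunique a ha).2) hl.1.1
    (by simpa [hl.1.2.1] using hu) (by simpa [hl.1.2.2] using hv) hw hwm
  exact absurd (hl.length_le_of_isInfix h2 hinf h1) (by omega)

/-- in an oriented cactus, for a cycle decomposing into two directed
`(u1,u2)`-paths of different lengths (`u1` the source, `u2` the sink of the cycle),
if the longer path has no internal cut-vertices then its set of internal vertices is
co-convex. -/
theorem stmt_19 (G : SimpleGraph V) (hG : IsCactus G)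
    (A : V → V → Prop) (hA : Oriented A)
    (horient : ∀ u v, G.Adj u v ↔ (A u v ∨ A v u))
    (u1 u2 : V) (l1 l2 : List V)
    (h1 : DiwalkFrom A u1 u2 l1) (h2 : DiwalkFrom A u1 u2 l2)
    (hnd1 : l1.Nodup) (hnd2 : l2.Nodup)
    (hdisj : ∀ v, v ∈ l1 → v ∈ l2 → v = u1 ∨ v = u2)
    (hcyc : ∃ c : G.Walk u1 u1, c.IsCycle ∧ ∀ v, v ∈ c.support ↔ (v ∈ l1 ∨ v ∈ l2))
    (hlen : l1.length < l2.length)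
    (hnocut : ∀ v ∈ l2, v ≠ u1 → v ≠ u2 → ¬ IsCutVertex G v) :
    GeoConvex A {v | ¬ (v ∈ l2 ∧ v ≠ u1 ∧ v ≠ u2)} :=
  stmt_19_general G hG A hA horient u1 u2 l1 l2 h1 h2 hnd2 hcyc hlen hnocut
end
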